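/- arXiv:2503.06476 — 3 statements merged into one kernel-verified Lean document; each statement's English description precedes it below -/
import Mathlib

section
/- Let f_{j,i} : ℝⁿ → ℝ for j ∈ {1,…,m}, i ∈ {1,…,p} be continuously differentiable, and set Φ_j(x) = max_i f_{j,i}(x), Φ(x) = (Φ_1(x),…,Φ_m(x)). If x* is a weak Pareto optimal point of Φ (there is no x with Φ_j(x) < Φ_j(x*) for all j), then x* is a critical point: for every direction t ∈ ℝⁿ there exist j and an active index i ∈ I_j(x*) = {i : f_{j,i}(x*) = Φ_j(x*)} with ∇f_{j,i}(x*)ᵀt ≥ 0. -/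
/-!
If some direction `t` were a strict descent direction for every active scenario of every
component, then for small `s > 0` each active `f j i` drops strictly below `Φ j xstar` along
`xstar + s • t`, while the inactive ones stay below it by continuity. Hence every `Φ j`
decreases strictly, contradicting weak Pareto optimality.
-/

open RealInnerProductSpace Filter Topology

section Descent

variable {E : Type*} [NormedAddCommGroup E] [NormedSpace ℝ E]

theorem HasFDerivAt.eventually_lt_of_apply_neg {f : E → ℝ} {f' : E →L[ℝ] ℝ} {x v : E}
    (hf : HasFDerivAt f f' x) (hv : f' v < 0) :
    ∀ᶠ s in 𝓝[>] (0 : ℝ), f (x + s • v) < f x := by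
  have hline : HasDerivAt (fun s : ℝ => x + s • v) v 0 := by
    simpa using ((hasDerivAt_id (0 : ℝ)).smul_const v).const_add x
  have hderiv : HasDerivAt (fun s : ℝ => f (x + s • v)) (f' v) 0 :=
    (by simpa using hf : HasFDerivAt f f' (x + (0 : ℝ) • v)).comp_hasDerivAt 0 hline
  filter_upwards [hderiv.tendsto_slope_zero_right.eventually (eventually_lt_nhds hv),
    self_mem_nhdsWithin] with s hslope (hs : 0 < s)
  simp only [zero_add, zero_smul, add_zero, smul_eq_mul] at hslope
  linarith [neg_of_mul_neg_right hslope (inv_nonneg.2 hs.le)]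

theorem Finset.eventually_sup'_lt_sup' {ι : Type*} {S : Finset ι} (hS : S.Nonempty)
    {g : ι → E → ℝ} {x v : E} (hg : ∀ i ∈ S, DifferentiableAt ℝ (g i) x)
    (hdescent : ∀ i ∈ S, g i x = S.sup' hS (g · x) → fderiv ℝ (g i) x v < 0) :
    ∀ᶠ s in 𝓝[>] (0 : ℝ),
      S.sup' hS (fun i => g i (x + s • v)) < S.sup' hS (g · x) := by
  simp only [Finset.sup'_lt_iff]
  refine (eventually_all_finset S).2 fun i hi => ?_
  rcases (S.le_sup' (g · x) hi).eq_or_lt with hactive | hinactive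
  · rw [← hactive]
    exact (hg i hi).hasFDerivAt.eventually_lt_of_apply_neg (hdescent i hi hactive)
  · have hcont : ContinuousAt (fun s : ℝ => g i (x + s • v)) 0 :=
      (hg i hi).continuousAt.comp_of_eq (by fun_prop) (by simp)
    exact (hcont.eventually_lt continuousAt_const (by simpa only [zero_smul, add_zero] using hinactive)).filter_mono
      nhdsWithin_le_nhds

end Descent

theorem stmt_2 {n m p : ℕ} [NeZero p]
    (f : Fin m → Fin p → EuclideanSpace ℝ (Fin n) → ℝ)
    (hf : ∀ j i, ContDiff ℝ 1 (f j i))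
    (Φ : Fin m → EuclideanSpace ℝ (Fin n) → ℝ)
    (hΦ : ∀ j x, Φ j x = Finset.univ.sup' Finset.univ_nonempty (fun i => f j i x))
    (xstar : EuclideanSpace ℝ (Fin n))
    (hweak : ¬ ∃ x, ∀ j, Φ j x < Φ j xstar) :
    ∀ t : EuclideanSpace ℝ (Fin n), ∃ j i,
      f j i xstar = Φ j xstar ∧ 0 ≤ ⟪gradient (f j i) xstar, t⟫ := by
  intro t
  by_contra! hstrict
  have hdescent : ∀ j, ∀ᶠ s in 𝓝[>] (0 : ℝ), Φ j (xstar + s • t) < Φ j xstar := by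
    intro j
    simp only [hΦ]
    refine Finset.eventually_sup'_lt_sup' _
      (fun i _ => ((hf j i).differentiable one_ne_zero).differentiableAt) fun i _ hactive => ?_
    rw [← inner_gradient_left]
    exact hstrict j i (by rw [hΦ]; exact hactive)
  obtain ⟨s, hs⟩ := (eventually_all.2 hdescent).exists
  exact hweak ⟨xstar + s • t, hs⟩
end

section
/- Let f_{j,i} : ℝⁿ → ℝ be continuously differentiable and convex for all j, i. Suppose x̃ satisfies f_{j,i}(x̃) ≤ f_{j,i}(x^k) for all j, i, and suppose x^{k+1} = x^k + α_k t^k where α_k > 0 and t^k = −Σ_{j,i} λ_{ij} ∇f_{j,i}(x^k) for some nonnegative weights λ_{ij}. Then ‖x̃ − x^{k+1}‖² ≤ ‖x̃ − x^k‖² + ‖x^k − x^{k+1}‖². -/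
open RealInnerProductSpace

/-! First-order convexity gives `⟪∇f(x), y - x⟫ ≤ f y - f x ≤ 0` for every `f = f_{j,i}` at
`x = x^k`, `y = x̃`. Hence the step `x^k - x^{k+1} = α_k ∑ λ_{ij} ∇f_{j,i}(x^k)` makes a non-acute
angle with `x̃ - x^k`, and the claim is the law of cosines for
`x̃ - x^{k+1} = (x̃ - x^k) + (x^k - x^{k+1})`. -/

theorem ConvexOn.apply_sub_le_sub_of_hasFDerivAt {E : Type*} [NormedAddCommGroup E]
    [NormedSpace ℝ E]
    {s : Set E} {f : E → ℝ} {f' : E →L[ℝ] ℝ} {x y : E}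
    (hconv : ConvexOn ℝ s f) (hx : x ∈ s) (hy : y ∈ s) (hf : HasFDerivAt f f' x) :
    f' (y - x) ≤ f y - f x := by
  set g : ℝ → ℝ := f ∘ AffineMap.lineMap x y
  have hg : ConvexOn ℝ (Set.Icc 0 1) g :=
    (hconv.comp_affineMap _).subset (fun _ ht ↦ hconv.1.lineMap_mem hx hy ht) (convex_Icc 0 1)
  have hg' : HasDerivAt g (f' (y - x)) 0 := by
    have hf0 : HasFDerivAt f f' (AffineMap.lineMap x y (0 : ℝ)) := by simpa using hf
    exact hf0.comp_hasDerivAt 0 AffineMap.hasDerivAt_lineMap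
  simpa [g, slope] using hg.le_slope_of_hasDerivWithinAt (by simp) (by simp) one_pos
    hg'.hasDerivWithinAt

theorem ConvexOn.inner_gradient_sub_le_sub {E : Type*} [NormedAddCommGroup E]
    [InnerProductSpace ℝ E] [CompleteSpace E] {s : Set E} {f : E → ℝ} {x y : E}
    (hconv : ConvexOn ℝ s f) (hx : x ∈ s) (hy : y ∈ s) (hf : DifferentiableAt ℝ f x) :
    ⟪gradient f x, y - x⟫ ≤ f y - f x := by
  simpa using hconv.apply_sub_le_sub_of_hasFDerivAt hx hy
    (hasGradientAt_iff_hasFDerivAt.mp hf.hasGradientAt)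

theorem inner_sum_smul_gradient_sub_nonpos {E ι : Type*} [NormedAddCommGroup E]
    [InnerProductSpace ℝ E] [CompleteSpace E] (t : Finset ι) {s : Set E} {f : ι → E → ℝ}
    {w : ι → ℝ} {x y : E} (hconv : ∀ a ∈ t, ConvexOn ℝ s (f a)) (hx : x ∈ s) (hy : y ∈ s)
    (hf : ∀ a ∈ t, DifferentiableAt ℝ (f a) x) (hw : ∀ a ∈ t, 0 ≤ w a)
    (hdesc : ∀ a ∈ t, f a y ≤ f a x) :
    ⟪∑ a ∈ t, w a • gradient (f a) x, y - x⟫ ≤ 0 := by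
  rw [sum_inner]
  refine Finset.sum_nonpos fun a ha ↦ ?_
  rw [real_inner_smul_left]
  have hdescent : ⟪gradient (f a) x, y - x⟫ ≤ 0 :=
    ((hconv a ha).inner_gradient_sub_le_sub hx hy (hf a ha)).trans
      (sub_nonpos.mpr (hdesc a ha))
  exact mul_nonpos_of_nonneg_of_nonpos (hw a ha) hdescent

theorem norm_add_sq_le_of_inner_nonpos {F : Type*} [NormedAddCommGroup F] [InnerProductSpace ℝ F]
    {u v : F} (h : ⟪u, v⟫ ≤ 0) : ‖u + v‖ ^ 2 ≤ ‖u‖ ^ 2 + ‖v‖ ^ 2 := by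
  rw [norm_add_sq_real]
  linarith

theorem stmt_4 {n m p : ℕ}
    (f : Fin m → Fin p → EuclideanSpace ℝ (Fin n) → ℝ)
    (hf : ∀ j i, ContDiff ℝ 1 (f j i))
    (hconv : ∀ j i, ConvexOn ℝ Set.univ (f j i))
    (xk xk1 xtilde tk : EuclideanSpace ℝ (Fin n))
    (lam : Fin m → Fin p → ℝ) (hlam : ∀ j i, 0 ≤ lam j i)
    (αk : ℝ) (hα : 0 < αk)
    (htk : tk = - ∑ j, ∑ i, lam j i • gradient (f j i) xk)
    (hstep : xk1 = xk + αk • tk)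
    (hx : ∀ j i, f j i xtilde ≤ f j i xk) :
    ‖xtilde - xk1‖ ^ 2 ≤ ‖xtilde - xk‖ ^ 2 + ‖xk - xk1‖ ^ 2 := by
  set d := ∑ ji : Fin m × Fin p, lam ji.1 ji.2 • gradient (f ji.1 ji.2) xk
  have hd : ⟪d, xtilde - xk⟫ ≤ 0 :=
    inner_sum_smul_gradient_sub_nonpos _ (fun ji _ ↦ hconv ji.1 ji.2) trivial trivial
      (fun ji _ ↦ (hf ji.1 ji.2).differentiable one_ne_zero xk) (fun ji _ ↦ hlam ji.1 ji.2)
      (fun ji _ ↦ hx ji.1 ji.2)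
  have hjump : xk - xk1 = αk • d := by
    rw [hstep, htk, ← Fintype.sum_prod_type']
    module
  have hangle : ⟪xtilde - xk, xk - xk1⟫ ≤ 0 := by
    rw [hjump, real_inner_smul_right, real_inner_comm]
    exact mul_nonpos_of_nonneg_of_nonpos hα.le hd
  simpa only [sub_add_sub_cancel] using norm_add_sq_le_of_inner_nonpos hangle
end

section
/- (KKT value bound) Suppose t* and ρ* solve min_{t,ρ} { ρ + ‖t‖²/2 : c_{ji} + ⟨a_{ji}, t⟩ ≤ ρ for all j,i }, where c_{ji} ≤ 0 with equality for at least one pair, with KKT multipliers λ_{ij} ≥ 0, Σ λ_{ij} = 1, t* = −Σ λ_{ij} a_{ji}, and complementary slackness λ_{ij}(c_{ji} + ⟨a_{ji}, t*⟩ − ρ*) = 0. Then ρ* ≤ −‖t*‖². -/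
open RealInnerProductSpace

theorem stmt_13 {n m p : ℕ}
    (c : Fin m → Fin p → ℝ) (a : Fin m → Fin p → EuclideanSpace ℝ (Fin n))
    (tstar : EuclideanSpace ℝ (Fin n)) (ρstar : ℝ)
    (lam : Fin m → Fin p → ℝ)
    (hlam : ∀ j i, 0 ≤ lam j i)
    (hsum : ∑ j, ∑ i, lam j i = 1)
    (hstat : tstar = - ∑ j, ∑ i, lam j i • a j i)
    (hc : ∀ j i, c j i ≤ 0)
    (hactive : ∃ j i, c j i = 0)
    (hfeas : ∀ j i, c j i + ⟪a j i, tstar⟫ ≤ ρstar)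
    (hcs : ∀ j i, lam j i * (c j i + ⟪a j i, tstar⟫ - ρstar) = 0) :
    ρstar ≤ -‖tstar‖ ^ 2 := by
  have key : ρstar = ∑ j, ∑ i, lam j i * (c j i + ⟪a j i, tstar⟫) := by
    have : ∑ j, ∑ i, lam j i * (c j i + ⟪a j i, tstar⟫)
        = ∑ j, ∑ i, lam j i * ρstar := by
      refine Finset.sum_congr rfl fun j _ => Finset.sum_congr rfl fun i _ => ?_
      have := hcs j i; nlinarith [hcs j i]
    rw [this]
    simp only [← Finset.sum_mul, hsum, one_mul]
  have step : ρstar ≤ ∑ j, ∑ i, lam j i * ⟪a j i, tstar⟫ := by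
    rw [key]
    refine Finset.sum_le_sum fun j _ => Finset.sum_le_sum fun i _ => ?_
    nlinarith [hlam j i, hc j i]
  have heq : ∑ j, ∑ i, lam j i * ⟪a j i, tstar⟫ = -‖tstar‖ ^ 2 := by
    have : ∑ j, ∑ i, lam j i * ⟪a j i, tstar⟫
        = ⟪∑ j, ∑ i, lam j i • a j i, tstar⟫ := by
      rw [sum_inner]
      refine Finset.sum_congr rfl fun j _ => ?_
      rw [sum_inner]
      refine Finset.sum_congr rfl fun i _ => ?_
      rw [real_inner_smul_left]
    rw [this]
    have ht : (∑ j, ∑ i, lam j i • a j i) = -tstar := by rw [hstat]; simp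
    rw [ht, inner_neg_left, real_inner_self_eq_norm_sq]
  linarith [step, heq.le, heq.ge]
end
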